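/- arXiv:1908.01710 — 4 statements merged into one kernel-verified Lean document; each statement's English description precedes it below -/
import Mathlib

section
/- Let M be an n×n real matrix with Mᵀ η M = η, where η = Id_{n−ν,ν}, and write M in block form with top-left (n−ν)×(n−ν) block M_S (the spatial part) and bottom-right ν×ν block M_T (the temporal part). Then det M_S = det M_T · det M. -/
open Matrix

/-- The pseudo-Euclidean scalar product of index `ν` on `ℝⁿ`:
`⟨x,y⟩_ν = x₁y₁ + ⋯ + x_{n-ν}y_{n-ν} - x_{n-ν+1}y_{n-ν+1} - ⋯ - x_n y_n`. -/
def pseudoInner (n ν : ℕ) (x y : Fin n → ℝ) : ℝ :=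
  ∑ i : Fin n, (if (i : ℕ) < n - ν then (1 : ℝ) else -1) * x i * y i


/-- The matrix `η = Id_{n-ν,ν}`: diagonal with `n-ν` entries `1` followed by `ν` entries `-1`. -/
def etaMat (n ν : ℕ) : Matrix (Fin n) (Fin n) ℝ :=
  Matrix.diagonal fun i => if (i : ℕ) < n - ν then 1 else -1

/-- For a pseudo-orthogonal matrix `M` (i.e. `Mᵀ η M = η`), the determinant of the spatial
part equals the determinant of the temporal part times the determinant of `M`. -/
theorem det_spatial_eq_det_temporal_mul_det
    (n ν : ℕ) (hν : ν ≤ n) (M : Matrix (Fin n) (Fin n) ℝ)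
    (hM : Mᵀ * etaMat n ν * M = etaMat n ν) :
    (Matrix.of fun i j : Fin (n - ν) =>
        M (Fin.castLE (Nat.sub_le n ν) i) (Fin.castLE (Nat.sub_le n ν) j)).det =
      (Matrix.of fun i j : Fin ν =>
          M ⟨n - ν + i, by have := i.isLt; omega⟩ ⟨n - ν + j, by have := j.isLt; omega⟩).det
        * M.det := by
  have hmn : n - ν + ν = n := Nat.sub_add_cancel hν
  let e : Fin (n - ν) ⊕ Fin ν ≃ Fin n := finSumFinEquiv.trans (finCongr hmn)
  have hl : ∀ i : Fin (n - ν), ((e (Sum.inl i) : Fin n) : ℕ) = (i : ℕ) := fun i => by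
    simp [e]
  have hr : ∀ i : Fin ν, ((e (Sum.inr i) : Fin n) : ℕ) = n - ν + (i : ℕ) := fun i => by
    simp [e]
  set N : Matrix (Fin (n - ν) ⊕ Fin ν) (Fin (n - ν) ⊕ Fin ν) ℝ := M.submatrix e e with hN
  set E : Matrix (Fin (n - ν) ⊕ Fin ν) (Fin (n - ν) ⊕ Fin ν) ℝ :=
    fromBlocks (1 : Matrix (Fin (n - ν)) (Fin (n - ν)) ℝ) 0 0 (-1) with hE
  have hEsub : (etaMat n ν).submatrix e e = E := by
    ext i j
    rcases i with i | i <;> rcases j with j | j <;>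
      simp only [submatrix_apply, etaMat, Matrix.diagonal_apply, hE, fromBlocks_apply₁₁,
        fromBlocks_apply₁₂, fromBlocks_apply₂₁, fromBlocks_apply₂₂, Matrix.one_apply,
        Matrix.zero_apply, Matrix.neg_apply, Fin.ext_iff, hl, hr] <;>
      split_ifs <;> simp_all <;> omega
  have hM' : Nᵀ * E * N = E := by
    have h1 : Nᵀ * E * N = (Mᵀ * etaMat n ν * M).submatrix e e := by
      rw [← hEsub, hN, transpose_submatrix, submatrix_mul_equiv, submatrix_mul_equiv]
    rw [h1, hM, hEsub]
  have hEE : E * E = 1 := by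
    rw [hE, fromBlocks_multiply]
    simp [← fromBlocks_one]
  have hNE : N * (E * Nᵀ * E) = 1 := by
    rw [mul_eq_one_comm]
    calc E * Nᵀ * E * N = E * (Nᵀ * E * N) := by noncomm_ring
      _ = E * E := by rw [hM']
      _ = 1 := hEE
  have hMEN : N * E * Nᵀ = E := by
    have h1 : N * E * Nᵀ * (E * E) = 1 * E := by rw [← hNE]; noncomm_ring
    simpa [hEE] using h1
  set A := N.toBlocks₁₁ with hA
  set B := N.toBlocks₁₂ with hB
  set C := N.toBlocks₂₁ with hC
  set D := N.toBlocks₂₂ with hD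
  have hNblocks : N = fromBlocks A B C D := (fromBlocks_toBlocks N).symm
  rw [hNblocks, hE, fromBlocks_transpose, fromBlocks_multiply, fromBlocks_multiply] at hMEN
  have h11 := congrArg Matrix.toBlocks₁₁ hMEN
  have h21 := congrArg Matrix.toBlocks₂₁ hMEN
  simp only [toBlocks_fromBlocks₁₁, toBlocks_fromBlocks₂₁, Matrix.mul_one, Matrix.mul_zero,
    Matrix.mul_neg, Matrix.neg_mul, add_zero, zero_add, zero_sub, ← sub_eq_add_neg] at h11 h21
  have h11' : A * Aᵀ - B * Bᵀ = 1 := h11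
  have h21' : C * Aᵀ - D * Bᵀ = 0 := h21
  have hkey : N * fromBlocks Aᵀ 0 (-Bᵀ) 1 = fromBlocks 1 B 0 D := by
    rw [hNblocks, fromBlocks_multiply]
    simp only [Matrix.mul_one, Matrix.mul_zero, Matrix.mul_neg, Matrix.neg_mul, add_zero,
      zero_add, zero_sub, ← sub_eq_add_neg]
    rw [h11', h21']
  have hdet := congrArg Matrix.det hkey
  rw [Matrix.det_mul, Matrix.det_fromBlocks_zero₁₂, Matrix.det_fromBlocks_zero₂₁,
    Matrix.det_transpose, Matrix.det_one, Matrix.det_one, mul_one, one_mul] at hdet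
  -- hdet : N.det * A.det = D.det
  have hdetN : N.det = M.det := Matrix.det_submatrix_equiv_self e M
  have hdetsq : N.det * N.det = 1 := by
    have h := congrArg Matrix.det hM'
    rw [Matrix.det_mul, Matrix.det_mul, Matrix.det_transpose] at h
    have hEne : E.det ≠ 0 := by
      rw [hE, Matrix.det_fromBlocks_zero₂₁, Matrix.det_one, one_mul]
      simp [Matrix.det_neg]
    have := mul_right_cancel₀ hEne (by linarith [h] : N.det * N.det * E.det = 1 * E.det)
    linarith [this]
  have hAeq : A = Matrix.of fun i j : Fin (n - ν) =>
      M (Fin.castLE (Nat.sub_le n ν) i) (Fin.castLE (Nat.sub_le n ν) j) := by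
    ext i j
    show M (e (Sum.inl i)) (e (Sum.inl j)) = _
    congr 1
  have hDeq : D = Matrix.of fun i j : Fin ν =>
      M ⟨n - ν + i, by have := i.isLt; omega⟩ ⟨n - ν + j, by have := j.isLt; omega⟩ := by
    ext i j
    show M (e (Sum.inr i)) (e (Sum.inr j)) = _
    congr 1
  rw [← hAeq, ← hDeq, ← hdetN]
  calc A.det = A.det * (N.det * N.det) := by rw [hdetsq, mul_one]
    _ = (N.det * A.det) * N.det := by ring
    _ = D.det * N.det := by rw [hdet]
end

section
/- (Backwards triangle inequality) Let u and v be timelike vectors in Lorentz–Minkowski space 𝕃ⁿ that are both future-directed or both past-directed (where a timelike vector w is future-directed if ⟨w, e_n⟩_L < 0 and past-directed if ⟨w, e_n⟩_L > 0, with e_n = (0,…,0,1)). Then ‖u + v‖_L ≥ ‖u‖_L + ‖v‖_L, where ‖x‖_L = √|⟨x,x⟩_L|. -/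
/-- The "fake norm" `‖x‖_L = √|⟨x,x⟩_L|` on Lorentz–Minkowski space `𝕃ⁿ`. -/
noncomputable def lorNorm (n : ℕ) (x : Fin n → ℝ) : ℝ :=
  Real.sqrt |pseudoInner n 1 x x|

/-- The last standard basis vector `e_n = (0,…,0,1)` of `𝕃ⁿ`. -/
def lastVec (n : ℕ) : Fin n → ℝ := fun i => if (i : ℕ) = n - 1 then 1 else 0

/-- The spatial (Euclidean) part of the Lorentz product. -/
noncomputable def sPart (n : ℕ) (x y : Fin n → ℝ) : ℝ :=
  ∑ i : Fin n, if (i : ℕ) < n - 1 then x i * y i else 0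

lemma pseudo_decomp (n : ℕ) (hn : 1 ≤ n) (x y : Fin n → ℝ) :
    pseudoInner n 1 x y = sPart n x y - x ⟨n-1, by omega⟩ * y ⟨n-1, by omega⟩ := by
  have h1 : ∀ i : Fin n, (if (i:ℕ) < n-1 then (1:ℝ) else -1) * x i * y i
      = (if (i:ℕ) < n-1 then x i * y i else 0) - (if (i:ℕ) < n-1 then 0 else x i * y i) := by
    intro i; split <;> ring
  have h2 : (∑ i : Fin n, if (i:ℕ) < n-1 then (0:ℝ) else x i * y i)
      = x ⟨n-1, by omega⟩ * y ⟨n-1, by omega⟩ := by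
    rw [Finset.sum_eq_single (⟨n-1, by omega⟩ : Fin n)]
    · simp
    · intro i _ hi
      have : (i:ℕ) < n - 1 := by
        have := i.isLt
        have : (i:ℕ) ≠ n - 1 := fun h => hi (Fin.ext h)
        omega
      simp [this]
    · simp
  unfold pseudoInner sPart
  rw [Finset.sum_congr rfl (fun i _ => h1 i), Finset.sum_sub_distrib, h2]

lemma sPart_nonneg (n : ℕ) (x : Fin n → ℝ) : 0 ≤ sPart n x x := by
  apply Finset.sum_nonneg
  intro i _
  split
  · exact mul_self_nonneg _
  · exact le_refl 0

lemma sPart_cs (n : ℕ) (x y : Fin n → ℝ) : (sPart n x y)^2 ≤ sPart n x x * sPart n y y := by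
  unfold sPart
  have h := Finset.sum_mul_sq_le_sq_mul_sq Finset.univ
    (fun i : Fin n => if (i:ℕ) < n - 1 then x i else 0)
    (fun i : Fin n => if (i:ℕ) < n - 1 then y i else 0)
  have e : ∀ (a b : Fin n → ℝ),
      (∑ i : Fin n, (if (i:ℕ) < n - 1 then a i else 0) * (if (i:ℕ) < n - 1 then b i else 0))
        = ∑ i : Fin n, if (i:ℕ) < n - 1 then a i * b i else 0 := by
    intro a b
    apply Finset.sum_congr rfl
    intro i _
    split <;> simp
  have e2 : ∀ (a : Fin n → ℝ),
      (∑ i : Fin n, (if (i:ℕ) < n - 1 then a i else 0) ^ 2)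
        = ∑ i : Fin n, if (i:ℕ) < n - 1 then a i * a i else 0 := by
    intro a
    apply Finset.sum_congr rfl
    intro i _
    split <;> simp [sq]
  rwa [e, e2, e2] at h

lemma pseudo_lastVec (n : ℕ) (hn : 1 ≤ n) (x : Fin n → ℝ) :
    pseudoInner n 1 x (lastVec n) = - x ⟨n-1, by omega⟩ := by
  unfold pseudoInner lastVec
  rw [Finset.sum_eq_single (⟨n-1, by omega⟩ : Fin n)]
  · simp
  · intro i _ hi
    have : (i:ℕ) ≠ n - 1 := fun h => hi (Fin.ext h)
    simp [this]
  · simp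

lemma pseudo_expand (n : ℕ) (u v : Fin n → ℝ) :
    pseudoInner n 1 (u+v) (u+v)
      = pseudoInner n 1 u u + 2 * pseudoInner n 1 u v + pseudoInner n 1 v v := by
  unfold pseudoInner
  rw [Finset.mul_sum, ← Finset.sum_add_distrib, ← Finset.sum_add_distrib]
  apply Finset.sum_congr rfl
  intro i _
  simp only [Pi.add_apply]
  ring

lemma key_rev (a b c p q : ℝ) (ha : 0 ≤ a) (hb : 0 ≤ b) (h1 : c^2 ≤ a*b)
    (h2 : a < p^2) (h3 : q^2 > b) (h4 : 0 < p*q) :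
    Real.sqrt ((p^2-a)*(q^2-b)) ≤ p*q - c := by
  set s := Real.sqrt a with hs
  set t := Real.sqrt b with ht
  have hs2 : s^2 = a := Real.sq_sqrt ha
  have ht2 : t^2 = b := Real.sq_sqrt hb
  have hs0 : 0 ≤ s := Real.sqrt_nonneg a
  have ht0 : 0 ≤ t := Real.sqrt_nonneg b
  have hps : s < |p| := by
    nlinarith [abs_nonneg p, sq_abs p]
  have hqt : t < |q| := by
    nlinarith [abs_nonneg q, sq_abs q]
  have hpq : p*q = |p| * |q| := by
    rw [← abs_mul, abs_of_pos h4]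
  have hc : |c| ≤ s*t := by
    have : c^2 ≤ (s*t)^2 := by nlinarith
    calc |c| = Real.sqrt (c^2) := (Real.sqrt_sq_eq_abs c).symm
    _ ≤ Real.sqrt ((s*t)^2) := Real.sqrt_le_sqrt this
    _ = s*t := Real.sqrt_sq (by positivity)
  have h5 : Real.sqrt ((p^2-a)*(q^2-b)) ≤ |p| * |q| - s*t := by
    have harg : (p^2-a)*(q^2-b) ≤ (|p| * |q| - s*t)^2 := by
      nlinarith [sq_nonneg (|p| * t - s * |q|), sq_abs p, sq_abs q]
    calc Real.sqrt ((p^2-a)*(q^2-b)) ≤ Real.sqrt ((|p| * |q| - s*t)^2) := Real.sqrt_le_sqrt harg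
    _ = |p| * |q| - s*t := Real.sqrt_sq (by nlinarith)
  have : |p| * |q| - s*t ≤ p*q - c := by
    rw [← hpq]
    have := le_abs_self c
    linarith [hpq]
  linarith

/-- Backwards triangle inequality: for timelike `u, v` in `𝕃ⁿ`, both future-directed or both
past-directed, one has `‖u+v‖_L ≥ ‖u‖_L + ‖v‖_L`. -/
theorem backwards_triangle_inequality
    (n : ℕ) (hn : 1 ≤ n) (u v : Fin n → ℝ)
    (hu : pseudoInner n 1 u u < 0) (hv : pseudoInner n 1 v v < 0)
    (hdir : (pseudoInner n 1 u (lastVec n) < 0 ∧ pseudoInner n 1 v (lastVec n) < 0) ∨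
        (0 < pseudoInner n 1 u (lastVec n) ∧ 0 < pseudoInner n 1 v (lastVec n))) :
    lorNorm n u + lorNorm n v ≤ lorNorm n (u + v) := by
  set L : Fin n := ⟨n-1, by omega⟩ with hL
  set p := u L with hp
  set q := v L with hq
  set a := sPart n u u with ha'
  set b := sPart n v v with hb'
  set c := sPart n u v with hc'
  have hdu : pseudoInner n 1 u u = a - p * p := pseudo_decomp n hn u u
  have hdv : pseudoInner n 1 v v = b - q * q := pseudo_decomp n hn v v
  have hduv : pseudoInner n 1 u v = c - p * q := pseudo_decomp n hn u v
  have ha : 0 ≤ a := sPart_nonneg n u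
  have hb : 0 ≤ b := sPart_nonneg n v
  have hcs : c^2 ≤ a * b := sPart_cs n u v
  have hap : a < p^2 := by rw [hdu] at hu; nlinarith
  have hbq : b < q^2 := by rw [hdv] at hv; nlinarith
  have hpq : 0 < p * q := by
    rw [pseudo_lastVec n hn u, pseudo_lastVec n hn v] at hdir
    rcases hdir with ⟨h1, h2⟩ | ⟨h1, h2⟩
    · have : 0 < p := by linarith
      have : 0 < q := by linarith
      positivity
    · have hp0 : p < 0 := by linarith
      have hq0 : q < 0 := by linarith
      have := mul_pos_of_neg_of_neg hp0 hq0
      linarith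
  have hkey : Real.sqrt ((p^2-a)*(q^2-b)) ≤ p*q - c :=
    key_rev a b c p q ha hb hcs hap hbq hpq
  have hA : (0:ℝ) < p^2 - a := by linarith
  have hB : (0:ℝ) < q^2 - b := by linarith
  -- norms of u and v
  have hnu : lorNorm n u = Real.sqrt (p^2 - a) := by
    unfold lorNorm
    rw [hdu, abs_of_neg (by nlinarith)]
    ring_nf
  have hnv : lorNorm n v = Real.sqrt (q^2 - b) := by
    unfold lorNorm
    rw [hdv, abs_of_neg (by nlinarith)]
    ring_nf
  have hsum : pseudoInner n 1 (u+v) (u+v) = (a - p*p) + 2*(c - p*q) + (b - q*q) := by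
    rw [pseudo_expand n u v, hdu, hdv, hduv]
  have hsumneg : pseudoInner n 1 (u+v) (u+v) < 0 := by
    rw [hsum]
    have hsqrt0 : (0:ℝ) ≤ Real.sqrt ((p^2-a)*(q^2-b)) := Real.sqrt_nonneg _
    nlinarith
  have hnuv : lorNorm n (u+v) = Real.sqrt ((p^2 - a) + (q^2 - b) + 2*(p*q - c)) := by
    unfold lorNorm
    rw [hsum, abs_of_neg (by rw [hsum] at hsumneg; exact hsumneg)]
    ring_nf
  rw [hnu, hnv, hnuv]
  have hAB : Real.sqrt (p^2-a) * Real.sqrt (q^2-b) = Real.sqrt ((p^2-a)*(q^2-b)) :=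
    (Real.sqrt_mul hA.le _).symm
  have h1 : (Real.sqrt (p^2-a) + Real.sqrt (q^2-b))^2
      ≤ (p^2 - a) + (q^2 - b) + 2*(p*q - c) := by
    have e : (Real.sqrt (p^2-a) + Real.sqrt (q^2-b))^2
        = (p^2-a) + (q^2-b) + 2*(Real.sqrt (p^2-a) * Real.sqrt (q^2-b)) := by
      rw [add_sq, Real.sq_sqrt hA.le, Real.sq_sqrt hB.le]
      ring
    rw [e, hAB]
    linarith
  calc Real.sqrt (p^2-a) + Real.sqrt (q^2-b)
      = Real.sqrt ((Real.sqrt (p^2-a) + Real.sqrt (q^2-b))^2) :=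
        (Real.sqrt_sq (by positivity)).symm
    _ ≤ Real.sqrt ((p^2 - a) + (q^2 - b) + 2*(p*q - c)) := Real.sqrt_le_sqrt h1
end

section
/- Let u₁, …, u_{n−1}, v₁, …, v_{n−1} ∈ ℝⁿ_ν, and let u, v ∈ ℝⁿ be the vectors characterized by ⟨u, x⟩_ν = det(x, u₁, …, u_{n−1}) and ⟨v, x⟩_ν = det(x, v₁, …, v_{n−1}) for all x ∈ ℝⁿ (i.e., u = u₁ × ⋯ × u_{n−1} and v = v₁ × ⋯ × v_{n−1} are the index-ν cross products). Then ⟨u, v⟩_ν = (−1)^ν · det((⟨u_i, v_j⟩_ν)_{1 ≤ i,j ≤ n−1}). -/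
/-- Determinant of a matrix whose first row vanishes off the diagonal. -/
lemma det_block_of_row_zero {n : ℕ} (M : Matrix (Fin (n + 1)) (Fin (n + 1)) ℝ)
    (h : ∀ j : Fin n, M 0 j.succ = 0) :
    M.det = M 0 0 * (M.submatrix Fin.succ Fin.succ).det := by
  rw [Matrix.det_succ_row_zero]
  rw [Fin.sum_univ_succ]
  have h0 : ∀ j : Fin n,
      (-1 : ℝ) ^ ((j.succ : Fin (n+1)) : ℕ) * M 0 j.succ *
        (M.submatrix Fin.succ (j.succ).succAbove).det = 0 := by
    intro j; rw [h j]; ring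
  rw [Finset.sum_congr rfl fun j _ => h0 j]
  simp [Fin.succAbove_zero]

lemma prod_eps {n ν : ℕ} (hν : ν ≤ n + 1) :
    (∏ k : Fin (n + 1), (if (k : ℕ) < n + 1 - ν then (1 : ℝ) else -1)) = (-1 : ℝ) ^ ν := by
  set m := n + 1 - ν with hm
  have hmn : m ≤ n + 1 := Nat.sub_le _ _
  have : (∏ k : Fin (n + 1), (if (k : ℕ) < m then (1 : ℝ) else -1)) =
      ∏ k ∈ Finset.range (n + 1), (if k < m then (1 : ℝ) else -1) := by
    rw [Finset.prod_range fun k => (if k < m then (1 : ℝ) else -1)]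
  rw [this]
  rw [Finset.range_eq_Ico, ← Finset.prod_Ico_consecutive _ (Nat.zero_le m) hmn]
  have h1 : (∏ k ∈ Finset.Ico 0 m, (if k < m then (1 : ℝ) else -1)) = 1 := by
    apply Finset.prod_eq_one
    intro k hk
    simp only [Finset.mem_Ico] at hk
    simp [hk.2]
  have h2 : (∏ k ∈ Finset.Ico m (n + 1), (if k < m then (1 : ℝ) else -1)) = (-1 : ℝ) ^ ν := by
    have : (∏ k ∈ Finset.Ico m (n + 1), (if k < m then (1 : ℝ) else -1)) =
        ∏ _k ∈ Finset.Ico m (n + 1), (-1 : ℝ) := by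
      apply Finset.prod_congr rfl
      intro k hk
      simp only [Finset.mem_Ico] at hk
      simp [not_lt.mpr hk.1]
    rw [this, Finset.prod_const, Nat.card_Ico]
    congr 1
    omega
  rw [h1, h2, one_mul]

/-- If `c = u₁ × ⋯ × uₙ` and `d = v₁ × ⋯ × vₙ` are the index-`ν` cross products in
`ℝⁿ⁺¹_ν` (characterized by `⟨c,x⟩_ν = det(x,u₁,…,uₙ)` and `⟨d,x⟩_ν = det(x,v₁,…,vₙ)`),
then `⟨c,d⟩_ν = (-1)^ν det(⟨uᵢ,vⱼ⟩_ν)`. -/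
theorem pseudoInner_cross_cross
    (n ν : ℕ) (hν : ν ≤ n + 1)
    (U V : Fin n → (Fin (n + 1) → ℝ)) (c d : Fin (n + 1) → ℝ)
    (hc : ∀ x : Fin (n + 1) → ℝ,
      pseudoInner (n + 1) ν c x =
        (Matrix.of fun i j : Fin (n + 1) => (Fin.cons x U : Fin (n + 1) → Fin (n + 1) → ℝ) j i).det)
    (hd : ∀ x : Fin (n + 1) → ℝ,
      pseudoInner (n + 1) ν d x =
        (Matrix.of fun i j : Fin (n + 1) => (Fin.cons x V : Fin (n + 1) → Fin (n + 1) → ℝ) j i).det) :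
    pseudoInner (n + 1) ν c d =
      (-1 : ℝ) ^ ν *
        (Matrix.of fun i j : Fin n => pseudoInner (n + 1) ν (U i) (V j)).det := by
  classical
  set eps : Fin (n + 1) → ℝ := fun k => if (k : ℕ) < n + 1 - ν then (1 : ℝ) else -1 with heps
  have heps_sq : ∀ k, eps k * eps k = 1 := by
    intro k; simp only [heps]; split <;> norm_num
  set G : Matrix (Fin n) (Fin n) ℝ :=
    Matrix.of fun i j : Fin n => pseudoInner (n + 1) ν (U i) (V j) with hG
  -- Zero pairings from duplicate columns
  have hdv : ∀ j : Fin n, pseudoInner (n + 1) ν d (V j) = 0 := by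
    intro j
    rw [hd (V j)]
    apply Matrix.det_zero_of_column_eq (i := 0) (j := j.succ) (Fin.succ_ne_zero j).symm
    intro k
    simp [Fin.cons_zero, Fin.cons_succ]
  -- The key identity: ∀ y, (-1)^ν ⬝ ⟨c,d⟩ ⬝ ⟨d,y⟩ = ⟨d,y⟩ ⬝ det G
  have key : ∀ y : Fin (n + 1) → ℝ,
      ((-1 : ℝ) ^ ν * pseudoInner (n + 1) ν c d) * pseudoInner (n + 1) ν d y
        = pseudoInner (n + 1) ν d y * G.det := by
    intro y
    set R : Matrix (Fin (n + 1)) (Fin (n + 1)) ℝ :=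
      Matrix.of fun i k => (Fin.cons d U : Fin (n + 1) → Fin (n + 1) → ℝ) i k with hR
    set A : Matrix (Fin (n + 1)) (Fin (n + 1)) ℝ := R * Matrix.diagonal eps with hA
    set B : Matrix (Fin (n + 1)) (Fin (n + 1)) ℝ :=
      Matrix.of fun k j => (Fin.cons y V : Fin (n + 1) → Fin (n + 1) → ℝ) j k with hB
    have hdetR : R.det = pseudoInner (n + 1) ν c d := by
      rw [hc d]
      exact (Matrix.det_transpose R).symm
    have hdetA : A.det = pseudoInner (n + 1) ν c d * (-1 : ℝ) ^ ν := by
      rw [hA, Matrix.det_mul, Matrix.det_diagonal, hdetR, prod_eps hν]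
    have hdetB : B.det = pseudoInner (n + 1) ν d y := by
      rw [hd y]
    have hAB : A * B = Matrix.of fun i j =>
        pseudoInner (n + 1) ν ((Fin.cons d U : Fin (n + 1) → Fin (n + 1) → ℝ) i)
          ((Fin.cons y V : Fin (n + 1) → Fin (n + 1) → ℝ) j) := by
      ext i j
      rw [hA, hB, Matrix.mul_apply]
      simp only [Matrix.mul_diagonal, Matrix.of_apply, pseudoInner, hR, heps]
      apply Finset.sum_congr rfl
      intro k _
      ring
    have hdetAB : (A * B).det = pseudoInner (n + 1) ν d y * G.det := by
      rw [hAB]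
      rw [det_block_of_row_zero _ (fun j => by
        simpa [Fin.cons_zero, Fin.cons_succ] using hdv j)]
      have e1 : (Matrix.of fun i j =>
          pseudoInner (n + 1) ν ((Fin.cons d U : Fin (n + 1) → Fin (n + 1) → ℝ) i)
            ((Fin.cons y V : Fin (n + 1) → Fin (n + 1) → ℝ) j)) 0 0
          = pseudoInner (n + 1) ν d y := by
        simp
      have e2 : ((Matrix.of fun i j =>
          pseudoInner (n + 1) ν ((Fin.cons d U : Fin (n + 1) → Fin (n + 1) → ℝ) i)
            ((Fin.cons y V : Fin (n + 1) → Fin (n + 1) → ℝ) j)).submatrix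
              Fin.succ Fin.succ) = G := by
        ext i j
        simp [hG, Fin.cons_succ]
      rw [e1, e2]
    calc ((-1 : ℝ) ^ ν * pseudoInner (n + 1) ν c d) * pseudoInner (n + 1) ν d y
        = A.det * B.det := by rw [hdetA, hdetB]; ring
      _ = (A * B).det := (Matrix.det_mul A B).symm
      _ = pseudoInner (n + 1) ν d y * G.det := hdetAB
  by_cases hd0 : d = 0
  · -- degenerate case: d = 0, both sides vanish
    have hlhs : pseudoInner (n + 1) ν c d = 0 := by
      simp [pseudoInner, hd0]
    rw [hlhs]
    -- show det G = 0 by finding a nonzero kernel vector coming from a dependence among the V's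
    have hdet0 : ∀ x : Fin (n + 1) → ℝ,
        (Matrix.of fun i j : Fin (n + 1) =>
          (Fin.cons x V : Fin (n + 1) → Fin (n + 1) → ℝ) j i).det = 0 := by
      intro x
      rw [← hd x]
      simp [pseudoInner, hd0]
    have hVdep : ∃ w : Fin n → ℝ, w ≠ 0 ∧ ∑ j, w j • V j = 0 := by
      by_contra hcon
      push_neg at hcon
      have hVind : LinearIndependent ℝ V := by
        rw [Fintype.linearIndependent_iff]
        intro g hg i
        by_contra hgi
        exact hcon g (fun h0 => hgi (by rw [h0]; rfl)) hg
      -- find x outside the span of the V's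
      have hspan : ∃ x : Fin (n + 1) → ℝ, x ∉ Submodule.span ℝ (Set.range V) := by
        by_contra hall
        push_neg at hall
        have htop : Submodule.span ℝ (Set.range V) = ⊤ :=
          eq_top_iff.mpr fun x _ => hall x
        have h1 : Module.finrank ℝ (Fin (n + 1) → ℝ) ≤ (Set.range V).toFinset.card := by
          rw [← finrank_top ℝ (Fin (n + 1) → ℝ), ← htop]
          exact finrank_span_le_card _
        have h2 : (Set.range V).toFinset.card ≤ n := by
          rw [Set.toFinset_card]
          calc Fintype.card (Set.range V) ≤ Fintype.card (Fin n) := Fintype.card_range_le V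
            _ = n := Fintype.card_fin n
        rw [Module.finrank_fin_fun] at h1
        omega
      obtain ⟨x, hx⟩ := hspan
      have hcons : LinearIndependent ℝ (Fin.cons x V : Fin (n + 1) → Fin (n + 1) → ℝ) :=
        linearIndependent_fin_cons.mpr ⟨hVind, hx⟩
      obtain ⟨w, hw0, hwmul⟩ := Matrix.exists_mulVec_eq_zero_iff.mpr (hdet0 x)
      have hsum : ∑ j, w j • (Fin.cons x V : Fin (n + 1) → Fin (n + 1) → ℝ) j = 0 := by
        funext k
        have := congrFun hwmul k
        simpa [Matrix.mulVec, dotProduct, mul_comm] using this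
      have := Fintype.linearIndependent_iff.mp hcons w hsum
      exact hw0 (funext this)
    obtain ⟨w, hw0, hwsum⟩ := hVdep
    have hGdet : G.det = 0 := by
      rw [← Matrix.exists_mulVec_eq_zero_iff]
      refine ⟨w, hw0, ?_⟩
      funext i
      simp only [Matrix.mulVec, dotProduct, hG, Matrix.of_apply, pseudoInner,
        Pi.zero_apply]
      have hstep : ∀ k : Fin (n + 1), (∑ j, w j * V j k) = 0 := by
        intro k
        have := congrFun hwsum k
        simpa [Finset.sum_apply, Pi.smul_apply, smul_eq_mul] using this
      calc (∑ j, (∑ k : Fin (n + 1), (if (k : ℕ) < n + 1 - ν then (1:ℝ) else -1) * U i k * V j k) * w j)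
          = ∑ j, ∑ k : Fin (n + 1), (if (k : ℕ) < n + 1 - ν then (1:ℝ) else -1) * U i k * (w j * V j k) := by
            apply Finset.sum_congr rfl; intro j _; rw [Finset.sum_mul]
            apply Finset.sum_congr rfl; intro k _; ring
        _ = ∑ k : Fin (n + 1), ∑ j, (if (k : ℕ) < n + 1 - ν then (1:ℝ) else -1) * U i k * (w j * V j k) :=
            Finset.sum_comm
        _ = ∑ k : Fin (n + 1), (if (k : ℕ) < n + 1 - ν then (1:ℝ) else -1) * U i k *
              (∑ j, w j * V j k) := by
            apply Finset.sum_congr rfl; intro k _; rw [Finset.mul_sum]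
        _ = 0 := by
            apply Finset.sum_eq_zero; intro k _; rw [hstep k, mul_zero]
    rw [hGdet]
    ring
  · -- nondegenerate case: take y = eps ⬝ d
    set y : Fin (n + 1) → ℝ := fun k => eps k * d k with hy
    have hdy : pseudoInner (n + 1) ν d y = ∑ k, d k * d k := by
      simp only [pseudoInner, hy]
      apply Finset.sum_congr rfl
      intro k _
      simp only [heps]
      split <;> ring
    have hdy_pos : pseudoInner (n + 1) ν d y ≠ 0 := by
      rw [hdy]
      have hpos : 0 < ∑ k, d k * d k := by
        rcases Function.ne_iff.mp hd0 with ⟨k, hk⟩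
        apply Finset.sum_pos' (fun i _ => mul_self_nonneg _)
        exact ⟨k, Finset.mem_univ k, mul_self_pos.mpr hk⟩
      exact ne_of_gt hpos
    have hkey := key y
    have h1 : (-1 : ℝ) ^ ν * pseudoInner (n + 1) ν c d = G.det := by
      apply mul_right_cancel₀ hdy_pos
      rw [hkey, mul_comm]
    have h2 : ((-1 : ℝ) ^ ν) * ((-1 : ℝ) ^ ν) = 1 := by
      rw [← pow_add]
      have : ν + ν = 2 * ν := by ring
      rw [this, pow_mul]
      norm_num
    calc pseudoInner (n + 1) ν c d
        = (((-1 : ℝ) ^ ν) * ((-1 : ℝ) ^ ν)) * pseudoInner (n + 1) ν c d := by rw [h2]; ring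
      _ = (-1 : ℝ) ^ ν * ((-1 : ℝ) ^ ν * pseudoInner (n + 1) ν c d) := by ring
      _ = (-1 : ℝ) ^ ν * G.det := by rw [h1]
end

section
/- Let I ⊆ ℝ be an open interval and let α : I → ℝ³ be a smooth curve into Lorentz–Minkowski space 𝕃³ such that ⟨α'(φ), α'(φ)⟩_L = 0 and ⟨α''(φ), α''(φ)⟩_L = 1 for all φ ∈ I (a lightlike curve parametrized by arc-photon). If p, v ∈ ℝ³ satisfy ⟨α(φ) − p, v⟩_L = 0 for all φ ∈ I, then v = 0. (Consequently, the only planar lightlike curves in 𝕃³ are null lines.) -/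
open scoped ContDiff


/-- The Lorentzian scalar product on `𝕃³`: `⟨x,y⟩_L = x₁y₁ + x₂y₂ − x₃y₃`. -/
def lorInner3 (x y : Fin 3 → ℝ) : ℝ := x 0 * y 0 + x 1 * y 1 - x 2 * y 2

private lemma hasDerivAt_proj {f : ℝ → Fin 3 → ℝ} {x : ℝ}
    (hf : DifferentiableAt ℝ f x) (i : Fin 3) :
    HasDerivAt (fun t => f t i) (deriv f x i) x := by
  exact hasDerivAt_pi.mp hf.hasDerivAt i

private lemma deriv_lor_eq {f g : ℝ → Fin 3 → ℝ} {x : ℝ}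
    (hf : DifferentiableAt ℝ f x) (hg : DifferentiableAt ℝ g x) :
    deriv (fun t => lorInner3 (f t) (g t)) x
      = lorInner3 (deriv f x) (g x) + lorInner3 (f x) (deriv g x) := by
  have H := ((((hasDerivAt_proj hf 0).mul (hasDerivAt_proj hg 0)).add
      ((hasDerivAt_proj hf 1).mul (hasDerivAt_proj hg 1))).sub
      ((hasDerivAt_proj hf 2).mul (hasDerivAt_proj hg 2)))
  have H' : HasDerivAt (fun t => lorInner3 (f t) (g t))
      (lorInner3 (deriv f x) (g x) + lorInner3 (f x) (deriv g x)) x := by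
    refine HasDerivAt.congr_deriv H ?_
    simp only [lorInner3]; ring
  exact H'.deriv

private lemma deriv_lor_const_eq {f : ℝ → Fin 3 → ℝ} (v : Fin 3 → ℝ) {x : ℝ}
    (hf : DifferentiableAt ℝ f x) :
    deriv (fun t => lorInner3 (f t) v) x = lorInner3 (deriv f x) v := by
  have H : HasDerivAt (fun t => lorInner3 (f t) v) (lorInner3 (deriv f x) v) x := by
    have H := ((((hasDerivAt_proj hf 0).mul_const (v 0)).add
        ((hasDerivAt_proj hf 1).mul_const (v 1))).sub
        ((hasDerivAt_proj hf 2).mul_const (v 2)))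
    exact H
  exact H.deriv

private lemma deriv_zero_of_const_on {s : Set ℝ} (hs : IsOpen s) {f : ℝ → ℝ} {c : ℝ}
    (h : ∀ t ∈ s, f t = c) {x : ℝ} (hx : x ∈ s) : deriv f x = 0 := by
  have he : f =ᶠ[nhds x] fun _ => c := Filter.eventually_of_mem (hs.mem_nhds hx) h
  rw [he.deriv_eq]
  simp

private lemma lor_symm (x y : Fin 3 → ℝ) : lorInner3 x y = lorInner3 y x := by
  simp [lorInner3]; ring

private lemma alg_step (A B C v : Fin 3 → ℝ)
    (h11 : lorInner3 A A = 0) (h22 : lorInner3 B B = 1) (h12 : lorInner3 A B = 0)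
    (h23 : lorInner3 B C = 0) (h13 : lorInner3 A C = -1)
    (e1 : lorInner3 A v = 0) (e2 : lorInner3 B v = 0) (e3 : lorInner3 C v = 0) :
    v = 0 := by
  simp only [lorInner3] at h11 h22 h12 h23 h13 e1 e2 e3
  have hD2 : (A 0 * (B 2 * C 1 - B 1 * C 2) - A 1 * (B 2 * C 0 - B 0 * C 2)
      - A 2 * (B 0 * C 1 - B 1 * C 0)) ^ 2 = 1 := by
    linear_combination
      (-(B 0 ^ 2 + B 1 ^ 2 - B 2 ^ 2) * (C 0 ^ 2 + C 1 ^ 2 - C 2 ^ 2)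
        + (B 0 * C 0 + B 1 * C 1 - B 2 * C 2) ^ 2) * h11
      + (-2 * (B 0 * C 0 + B 1 * C 1 - B 2 * C 2) * (A 0 * C 0 + A 1 * C 1 - A 2 * C 2)
        + (C 0 ^ 2 + C 1 ^ 2 - C 2 ^ 2) * (A 0 * B 0 + A 1 * B 1 - A 2 * B 2)) * h12
      + (A 0 * C 0 + A 1 * C 1 - A 2 * C 2) ^ 2 * h22
      + ((A 0 * C 0 + A 1 * C 1 - A 2 * C 2) - 1) * h13
  set D := A 0 * (B 2 * C 1 - B 1 * C 2) - A 1 * (B 2 * C 0 - B 0 * C 2)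
      - A 2 * (B 0 * C 1 - B 1 * C 0) with hD
  funext i
  fin_cases i
  · show v 0 = 0
    linear_combination (D * (B 2 * C 1 - B 1 * C 2)) * e1
      + (D * (A 1 * C 2 - A 2 * C 1)) * e2 + (D * (A 2 * B 1 - A 1 * B 2)) * e3
      - v 0 * hD2
  · show v 1 = 0
    linear_combination (D * (B 0 * C 2 - B 2 * C 0)) * e1
      + (D * (A 2 * C 0 - A 0 * C 2)) * e2 + (D * (A 0 * B 2 - A 2 * B 0)) * e3
      - v 1 * hD2
  · show v 2 = 0
    linear_combination (D * (B 0 * C 1 - B 1 * C 0)) * e1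
      + (D * (A 1 * C 0 - A 0 * C 1)) * e2 + (D * (A 0 * B 1 - A 1 * B 0)) * e3
      - v 2 * hD2

/-- If a lightlike curve with arc-photon parameter in `𝕃³` is contained in a plane
`{x | ⟨x − p, v⟩_L = 0}`, then `v = 0`. Consequently, the only planar lightlike curves
in `𝕃³` are null lines. -/
theorem lightlike_planar_implies_normal_zero
    (a b : ℝ) (hab : a < b) (α : ℝ → (Fin 3 → ℝ))
    (hsmooth : ContDiffOn ℝ (⊤ : ℕ∞) α (Set.Ioo a b))
    (hlight : ∀ φ ∈ Set.Ioo a b, lorInner3 (deriv α φ) (deriv α φ) = 0)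
    (harc : ∀ φ ∈ Set.Ioo a b, lorInner3 (deriv (deriv α) φ) (deriv (deriv α) φ) = 1)
    (p v : Fin 3 → ℝ)
    (hplane : ∀ φ ∈ Set.Ioo a b, lorInner3 (α φ - p) v = 0) :
    v = 0 := by
  set s := Set.Ioo a b with hsdef
  have hs : IsOpen s := isOpen_Ioo
  have h0 : ContDiffOn ℝ (∞ : WithTop ℕ∞) α s := hsmooth.of_le (by simp)
  have h1 : ContDiffOn ℝ (∞ : WithTop ℕ∞) (deriv α) s :=
    h0.deriv_of_isOpen hs (le_of_eq rfl)
  have h2 : ContDiffOn ℝ (∞ : WithTop ℕ∞) (deriv (deriv α)) s :=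
    h1.deriv_of_isOpen hs (le_of_eq rfl)
  have one_le : (∞ : WithTop ℕ∞) ≠ 0 := by simp
  have d0 : ∀ φ ∈ s, DifferentiableAt ℝ α φ := fun φ hφ =>
    (h0.differentiableOn one_le).differentiableAt (hs.mem_nhds hφ)
  have d1 : ∀ φ ∈ s, DifferentiableAt ℝ (deriv α) φ := fun φ hφ =>
    (h1.differentiableOn one_le).differentiableAt (hs.mem_nhds hφ)
  have d2 : ∀ φ ∈ s, DifferentiableAt ℝ (deriv (deriv α)) φ := fun φ hφ =>
    (h2.differentiableOn one_le).differentiableAt (hs.mem_nhds hφ)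
  -- ⟨α', v⟩ = 0 on s
  have hA : ∀ φ ∈ s, lorInner3 (deriv α φ) v = 0 := by
    intro φ hφ
    have hconst : ∀ t ∈ s, (fun t => lorInner3 (α t) v) t = lorInner3 p v := by
      intro t ht
      have := hplane t ht
      simp only [lorInner3, Pi.sub_apply] at this ⊢
      linarith
    have hz := deriv_zero_of_const_on hs hconst hφ
    rwa [deriv_lor_const_eq v (d0 φ hφ)] at hz
  -- ⟨α'', v⟩ = 0 on s
  have hB : ∀ φ ∈ s, lorInner3 (deriv (deriv α) φ) v = 0 := by
    intro φ hφ
    have hz := deriv_zero_of_const_on hs (f := fun t => lorInner3 (deriv α t) v) (c := 0)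
      (fun t ht => hA t ht) hφ
    rwa [deriv_lor_const_eq v (d1 φ hφ)] at hz
  -- ⟨α', α''⟩ = 0 on s
  have hD : ∀ φ ∈ s, lorInner3 (deriv α φ) (deriv (deriv α) φ) = 0 := by
    intro φ hφ
    have hz := deriv_zero_of_const_on hs
      (f := fun t => lorInner3 (deriv α t) (deriv α t)) (c := 0)
      (fun t ht => hlight t ht) hφ
    rw [deriv_lor_eq (d1 φ hφ) (d1 φ hφ)] at hz
    have := lor_symm (deriv (deriv α) φ) (deriv α φ)
    linarith
  set φ0 := ((a + b) / 2 : ℝ) with hφ0def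
  have hφ0 : φ0 ∈ s := by constructor <;> (simp only [hφ0def]; linarith)
  -- ⟨α''', v⟩ = 0 at φ0
  have hC : lorInner3 (deriv (deriv (deriv α)) φ0) v = 0 := by
    have hz := deriv_zero_of_const_on hs (f := fun t => lorInner3 (deriv (deriv α) t) v)
      (c := 0) (fun t ht => hB t ht) hφ0
    rwa [deriv_lor_const_eq v (d2 φ0 hφ0)] at hz
  -- ⟨α'', α'''⟩ = 0 at φ0
  have hE : lorInner3 (deriv (deriv α) φ0) (deriv (deriv (deriv α)) φ0) = 0 := by
    have hz := deriv_zero_of_const_on hs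
      (f := fun t => lorInner3 (deriv (deriv α) t) (deriv (deriv α) t)) (c := 1)
      (fun t ht => harc t ht) hφ0
    rw [deriv_lor_eq (d2 φ0 hφ0) (d2 φ0 hφ0)] at hz
    have := lor_symm (deriv (deriv (deriv α)) φ0) (deriv (deriv α) φ0)
    linarith
  -- ⟨α', α'''⟩ = -1 at φ0
  have hF : lorInner3 (deriv α φ0) (deriv (deriv (deriv α)) φ0) = -1 := by
    have hz := deriv_zero_of_const_on hs
      (f := fun t => lorInner3 (deriv α t) (deriv (deriv α) t)) (c := 0)
      (fun t ht => hD t ht) hφ0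
    rw [deriv_lor_eq (d1 φ0 hφ0) (d2 φ0 hφ0)] at hz
    have := harc φ0 hφ0
    have hsym := lor_symm (deriv (deriv α) φ0) (deriv α φ0)
    linarith
  exact alg_step (deriv α φ0) (deriv (deriv α) φ0) (deriv (deriv (deriv α)) φ0) v
    (hlight φ0 hφ0) (harc φ0 hφ0) (hD φ0 hφ0) hE hF
    (hA φ0 hφ0) (hB φ0 hφ0) hC
end
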